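/- arXiv:2503.19147 — 8 statements merged into one kernel-verified Lean document; each statement's English description precedes it below -/
import Mathlib

section
/- Let G and G' be finite directed graphs with the same vertex set such that every arc of G' is an arc of G. Then there exists an injective map m from the set of attractors of G into the set of attractors of G' such that m(B) ⊆ B for every attractor B of G; consequently, the number of attractors of G is at most the number of attractors of G'. -/
/-!
Every attractor `B` of `G` is a trap set of the sparser graph `G'`, so it contains an
attractor `m B` of `G'`. Two distinct attractors of `G` are disjoint (their intersection,
if nonempty, is a trap set contained in both), so the nonempty sets `m B` they contain are
distinct as well.
-/

/-- A trap set of a directed graph (given by its arc relation `E`):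
a nonempty set of vertices with no outgoing arc. -/
def TrapSet {V : Type*} (E : V → V → Prop) (A : Set V) : Prop :=
  A.Nonempty ∧ ∀ x ∈ A, ∀ y, E x y → y ∈ A

/-- An attractor: an inclusion-minimal trap set. -/
def Attractor {V : Type*} (E : V → V → Prop) (A : Set V) : Prop :=
  TrapSet E A ∧ ∀ B ⊆ A, TrapSet E B → B = A

/-- Arc relation of the asynchronous state transition graph of a Boolean network `f`. -/
def astg {V : Type*} (f : V → (V → Bool) → Bool) (x y : V → Bool) : Prop :=
  ∃ v, y v = f v x ∧ y v ≠ x v ∧ ∀ u, u ≠ v → y u = x u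

/-- `f` is an AND-NOT Boolean network: every update function is constant or a
conjunction of literals over pairwise distinct variables. -/
def IsAndNot {V : Type*} [DecidableEq V] (f : V → (V → Bool) → Bool) : Prop :=
  ∀ v, (∃ b, ∀ x, f v x = b) ∨
    ∃ (L : Finset V) (sgn : V → Bool), ∀ x, f v x = decide (∀ u ∈ L, x u = sgn u)

/-- Positive arc `u → v` of the local influence graph of `f` at state `x`. -/
def localPos {V : Type*} [DecidableEq V] (f : V → (V → Bool) → Bool)
    (x : V → Bool) (u v : V) : Prop :=
  f v (Function.update x u false) = false ∧ f v (Function.update x u true) = true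

/-- Negative arc `u → v` of the local influence graph of `f` at state `x`. -/
def localNeg {V : Type*} [DecidableEq V] (f : V → (V → Bool) → Bool)
    (x : V → Bool) (u v : V) : Prop :=
  f v (Function.update x u false) = true ∧ f v (Function.update x u true) = false

/-- Positive arc of the global influence graph of `f`. -/
def igPos {V : Type*} [DecidableEq V] (f : V → (V → Bool) → Bool) (u v : V) : Prop :=
  ∃ x, localPos f x u v

/-- Negative arc of the global influence graph of `f`. -/
def igNeg {V : Type*} [DecidableEq V] (f : V → (V → Bool) → Bool) (u v : V) : Prop :=
  ∃ x, localNeg f x u v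

/-- The data of a cycle in a signed directed graph: `n ≥ 1` pairwise distinct vertices
`vtx 0, …, vtx (n-1)` together with a sign `sgn i` for the arc `vtx i → vtx ((i+1) % n)`
(`true` = positive, `false` = negative). -/
structure CycleData (V : Type*) where
  n : ℕ
  npos : 0 < n
  vtx : ℕ → V
  sgn : ℕ → Bool
  inj : ∀ i, i < n → ∀ j, j < n → vtx i = vtx j → i = j

/-- `C` is a cycle of the signed directed graph with positive arcs `P` and negative arcs `N`. -/
def IsCycleIn {V : Type*} (C : CycleData V) (P N : V → V → Prop) : Prop :=
  ∀ i, i < C.n →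
    if C.sgn i then P (C.vtx i) (C.vtx ((i + 1) % C.n))
    else N (C.vtx i) (C.vtx ((i + 1) % C.n))

/-- `v` is a vertex of the cycle `C`. -/
def InCycle {V : Type*} (C : CycleData V) (v : V) : Prop :=
  ∃ i, i < C.n ∧ C.vtx i = v

/-- The positive arc `u → v` is an arc of the cycle `C`. -/
def PosArcOf {V : Type*} (C : CycleData V) (u v : V) : Prop :=
  ∃ i, i < C.n ∧ C.vtx i = u ∧ C.vtx ((i + 1) % C.n) = v ∧ C.sgn i = true

/-- The negative arc `u → v` is an arc of the cycle `C`. -/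
def NegArcOf {V : Type*} (C : CycleData V) (u v : V) : Prop :=
  ∃ i, i < C.n ∧ C.vtx i = u ∧ C.vtx ((i + 1) % C.n) = v ∧ C.sgn i = false

/-- The cycle is even: it has an even number of negative arcs. -/
def IsEven {V : Type*} (C : CycleData V) : Prop :=
  Even (((Finset.range C.n).filter (fun i => C.sgn i = false)).card)

/-- `(u, v1, v2)` is a delocalizing triple of the cycle `C` in the signed graph `(P, N)`. -/
def DelocTriple {V : Type*} (C : CycleData V) (P N : V → V → Prop) (u v1 v2 : V) : Prop :=
  InCycle C v1 ∧ InCycle C v2 ∧ v1 ≠ v2 ∧ P u v1 ∧ N u v2 ∧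
    ¬ PosArcOf C u v1 ∧ ¬ NegArcOf C u v2

/-- The cycle `C` is strong in `(P, N)`: it admits no delocalizing triple. -/
def IsStrong {V : Type*} (C : CycleData V) (P N : V → V → Prop) : Prop :=
  ∀ u v1 v2, ¬ DelocTriple C P N u v1 v2

/-- All-positive path from `k` through the intermediate vertices `is` to the endpoint. -/
def PosPath {V : Type*} (P : V → V → Prop) : V → List V → V → Prop
  | k, [], t => P k t
  | k, j :: js, t => P k j ∧ PosPath P j js t

/-- Path from `k` through intermediate vertices `js` to the endpoint whose arcs are all
positive except the last one, which is negative. -/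
def PosNegPath {V : Type*} (P N : V → V → Prop) : V → List V → V → Prop
  | k, [], u => N k u
  | k, j :: js, u => P k j ∧ PosNegPath P N j js u

/-- `k` witnesses the inconsistency of the cycle `C` in the signed graph `(P, N)`. -/
def WitnessesIncons {V : Type*} (P N : V → V → Prop) (C : CycleData V) (k : V) : Prop :=
  ∃ (t u : V) (is js : List V),
    PosPath P k is t ∧ PosNegPath P N k js u ∧
    InCycle C t ∧ InCycle C u ∧ t ≠ u ∧
    ¬ PosArcOf C k t ∧ ¬ NegArcOf C k u ∧
    ∀ j ∈ js, ∃! p : V × Bool, cond p.2 (P p.1 j) (N p.1 j)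

/-- The cycle `C` is inconsistent in the signed graph `(P, N)`. -/
def Inconsistent {V : Type*} (P N : V → V → Prop) (C : CycleData V) : Prop :=
  ∃ k, WitnessesIncons P N C k

/-- The cycle `C` is consistent in the signed graph `(P, N)`. -/
def Consistent {V : Type*} (P N : V → V → Prop) (C : CycleData V) : Prop :=
  ¬ Inconsistent P N C

/-- `J` dominates the signed directed graph `(P, N)`. -/
def Dominates {V : Type*} (J : Set V) (P N : V → V → Prop) : Prop :=
  (∀ C : CycleData V, IsCycleIn C P N → IsEven C → Consistent P N C →
    ∃ v ∈ J, InCycle C v) ∧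
  (∀ C : CycleData V, IsCycleIn C P N → IsEven C → IsStrong C P N → Inconsistent P N C →
    (∃ v ∈ J, InCycle C v) ∨ ∃ k ∈ J, WitnessesIncons P N C k)

open Classical in
/-- The one-step percolation of a Boolean network: substitute the values of all
constant update functions into every update function. -/
noncomputable def percolate {V : Type*} (f : V → (V → Bool) → Bool) :
    V → (V → Bool) → Bool :=
  fun v x => f v (fun u => if h : ∃ b : Bool, ∀ y, f u y = b then h.choose else x u)

section TrapSets

variable {V : Type*} {E E' : V → V → Prop} {A B : Set V}

theorem TrapSet.of_le (hE : ∀ x y, E' x y → E x y) (hA : TrapSet E A) : TrapSet E' A :=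
  ⟨hA.1, fun x hx y hxy => hA.2 x hx y (hE x y hxy)⟩

theorem TrapSet.inter (hA : TrapSet E A) (hB : TrapSet E B) (hAB : (A ∩ B).Nonempty) :
    TrapSet E (A ∩ B) :=
  ⟨hAB, fun x hx y hxy => ⟨hA.2 x hx.1 y hxy, hB.2 x hx.2 y hxy⟩⟩

theorem Attractor.eq_of_inter_nonempty (hA : Attractor E A) (hB : Attractor E B)
    (hAB : (A ∩ B).Nonempty) : A = B := by
  have htrap := hA.1.inter hB.1 hAB
  exact (hA.2 _ Set.inter_subset_left htrap).symm.trans (hB.2 _ Set.inter_subset_right htrap)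

theorem TrapSet.exists_attractor_subset (hA : TrapSet E A) (hfin : A.Finite) :
    ∃ B ⊆ A, Attractor E B := by
  have htraps : {B : Set V | B ⊆ A ∧ TrapSet E B}.Finite :=
    hfin.finite_subsets.subset fun _ hB => hB.1
  obtain ⟨B, hB, hmin⟩ := htraps.exists_minimalFor id _ ⟨A, subset_rfl, hA⟩
  exact ⟨B, hB.1, hB.2, fun C hCB hC =>
    hCB.antisymm (hmin ⟨hCB.trans hB.1, hC⟩ hCB)⟩

end TrapSets

theorem stmt_0 {V : Type*} [Fintype V] (G G' : V → V → Prop)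
    (hsub : ∀ x y, G' x y → G x y) :
    (∃ m : {A : Set V // Attractor G A} → {A : Set V // Attractor G' A},
        Function.Injective m ∧ ∀ B, (m B).1 ⊆ B.1) ∧
      {A : Set V | Attractor G A}.ncard ≤ {A : Set V | Attractor G' A}.ncard := by
  have hsmaller (B : {A : Set V // Attractor G A}) : ∃ A ⊆ B.1, Attractor G' A :=
    (B.2.1.of_le hsub).exists_attractor_subset (Set.toFinite _)
  choose m hm_sub hm_attr using hsmaller
  let m' (B : {A : Set V // Attractor G A}) : {A : Set V // Attractor G' A} := ⟨m B, hm_attr B⟩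
  have hinj : Function.Injective m' := by
    intro B₁ B₂ h
    have hm : m B₁ = m B₂ := congrArg Subtype.val h
    have hmeet : (B₁.1 ∩ B₂.1).Nonempty :=
      (hm_attr B₁).1.1.mono (Set.subset_inter (hm_sub B₁) (hm ▸ hm_sub B₂))
    exact Subtype.ext (B₁.2.eq_of_inter_nonempty B₂.2 hmeet)
  refine ⟨⟨m', hinj, hm_sub⟩, ?_⟩
  rw [← Nat.card_coe_set_eq, ← Nat.card_coe_set_eq]
  exact Nat.card_le_card_of_injective m' hinj
end

section
/- Let f be an AND-NOT BN. If C is a local cycle of the global influence graph IG(f), i.e., C is a cycle of the local influence graph IG(f,x) for some state x, then C is a strong cycle of IG(f) (C admits no delocalizing triple in IG(f)). -/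
lemma localPos_char {V : Type*} [DecidableEq V] {f : V → (V → Bool) → Bool}
    {v : V} {L : Finset V} {sgn : V → Bool}
    (hv : ∀ x, f v x = decide (∀ u ∈ L, x u = sgn u)) (x : V → Bool) (u : V) :
    localPos f x u v ↔ u ∈ L ∧ sgn u = true ∧ ∀ w ∈ L, w ≠ u → x w = sgn w := by
  unfold localPos
  simp only [hv, decide_eq_true_eq, decide_eq_false_iff_not]
  constructor
  · rintro ⟨h0, h1⟩
    have hu : u ∈ L := by
      by_contra hcontra
      refine h0 (fun w hw => ?_)
      have hne : w ≠ u := fun h => hcontra (h ▸ hw)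
      rw [Function.update_of_ne hne]
      have := h1 w hw
      rwa [Function.update_of_ne hne] at this
    refine ⟨hu, ?_, ?_⟩
    · have := h1 u hu; rw [Function.update_self] at this; exact this.symm
    · intro w hw hne
      have := h1 w hw; rwa [Function.update_of_ne hne] at this
  · rintro ⟨hu, hs, hrest⟩
    constructor
    · intro hall
      have := hall u hu
      rw [Function.update_self] at this
      rw [hs] at this; exact absurd this (by simp)
    · intro w hw
      rcases eq_or_ne w u with rfl | hne
      · rw [Function.update_self]; exact hs.symm
      · rw [Function.update_of_ne hne]; exact hrest w hw hne

lemma localNeg_char {V : Type*} [DecidableEq V] {f : V → (V → Bool) → Bool}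
    {v : V} {L : Finset V} {sgn : V → Bool}
    (hv : ∀ x, f v x = decide (∀ u ∈ L, x u = sgn u)) (x : V → Bool) (u : V) :
    localNeg f x u v ↔ u ∈ L ∧ sgn u = false ∧ ∀ w ∈ L, w ≠ u → x w = sgn w := by
  unfold localNeg
  simp only [hv, decide_eq_true_eq, decide_eq_false_iff_not]
  constructor
  · rintro ⟨h0, h1⟩
    have hu : u ∈ L := by
      by_contra hcontra
      refine h1 (fun w hw => ?_)
      have hne : w ≠ u := fun h => hcontra (h ▸ hw)
      rw [Function.update_of_ne hne]
      have := h0 w hw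
      rwa [Function.update_of_ne hne] at this
    refine ⟨hu, ?_, ?_⟩
    · have := h0 u hu; rw [Function.update_self] at this; exact this.symm
    · intro w hw hne
      have := h0 w hw; rwa [Function.update_of_ne hne] at this
  · rintro ⟨hu, hs, hrest⟩
    constructor
    · intro w hw
      rcases eq_or_ne w u with rfl | hne
      · rw [Function.update_self]; exact hs.symm
      · rw [Function.update_of_ne hne]; exact hrest w hw hne
    · intro hall
      have := hall u hu
      rw [Function.update_self] at this
      rw [hs] at this; exact absurd this (by simp)

lemma pred_idx {n j : ℕ} (hn : 0 < n) (hj : j < n) :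
    (j + n - 1) % n < n ∧ ((j + n - 1) % n + 1) % n = j := by
  refine ⟨Nat.mod_lt _ hn, ?_⟩
  rcases Nat.eq_zero_or_pos j with rfl | hjpos
  · rw [Nat.zero_add, Nat.mod_eq_of_lt (show n - 1 < n by omega)]
    have h2 : n - 1 + 1 = n := by omega
    rw [h2, Nat.mod_self]
  · have h1 : j + n - 1 = (j - 1) + n := by omega
    rw [h1, Nat.add_mod_right, Nat.mod_eq_of_lt (show j - 1 < n by omega)]
    have h2 : j - 1 + 1 = j := by omega
    rw [h2, Nat.mod_eq_of_lt hj]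

theorem stmt_4 {V : Type*} [Fintype V] [DecidableEq V]
    (f : V → (V → Bool) → Bool) (hf : IsAndNot f)
    (C : CycleData V) (x : V → Bool)
    (hC : IsCycleIn C (localPos f x) (localNeg f x)) :
    IsStrong C (igPos f) (igNeg f) := by
  rintro u v1 v2 ⟨⟨j1, hj1, hv1⟩, ⟨j2, hj2, hv2⟩, hne, hP, hN, hnP, hnN⟩
  obtain ⟨y1, hy1⟩ := hP
  obtain ⟨y2, hy2⟩ := hN
  -- f v1 is non-constant
  rcases hf v1 with ⟨b, hb⟩ | ⟨L1, s1, hL1⟩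
  · have h1 := hy1.1; have h2 := hy1.2
    rw [hb] at h1 h2; rw [h1] at h2; exact absurd h2 (by simp)
  rcases hf v2 with ⟨b, hb⟩ | ⟨L2, s2, hL2⟩
  · have h1 := hy2.1; have h2 := hy2.2
    rw [hb] at h1 h2; rw [h1] at h2; exact absurd h2 (by simp)
  obtain ⟨huL1, hs1u, -⟩ := (localPos_char hL1 y1 u).mp hy1
  obtain ⟨huL2, hs2u, -⟩ := (localNeg_char hL2 y2 u).mp hy2
  -- incoming cycle arc of v1
  obtain ⟨hi1lt, hi1succ⟩ := pred_idx C.npos hj1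
  set i1 := (j1 + C.n - 1) % C.n with hi1
  have harc1 := hC i1 hi1lt
  rw [hi1succ, hv1] at harc1
  have hxu1 : x u = true := by
    cases hs : C.sgn i1 with
    | false =>
      rw [hs] at harc1; simp only [Bool.false_eq_true, if_false] at harc1
      obtain ⟨hwL, hws, hrest⟩ := (localNeg_char hL1 x (C.vtx i1)).mp harc1
      rcases eq_or_ne u (C.vtx i1) with rfl | hneu
      · rw [hs1u] at hws; exact absurd hws (by simp)
      · rw [hrest u huL1 hneu, hs1u]
    | true =>
      rw [hs] at harc1; simp only [if_true] at harc1
      obtain ⟨hwL, hws, hrest⟩ := (localPos_char hL1 x (C.vtx i1)).mp harc1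
      rcases eq_or_ne u (C.vtx i1) with rfl | hneu
      · exact absurd ⟨i1, hi1lt, rfl, by rw [hi1succ, hv1], hs⟩ hnP
      · rw [hrest u huL1 hneu, hs1u]
  -- incoming cycle arc of v2
  obtain ⟨hi2lt, hi2succ⟩ := pred_idx C.npos hj2
  set i2 := (j2 + C.n - 1) % C.n with hi2
  have harc2 := hC i2 hi2lt
  rw [hi2succ, hv2] at harc2
  have hxu2 : x u = false := by
    cases hs : C.sgn i2 with
    | true =>
      rw [hs] at harc2; simp only [if_true] at harc2
      obtain ⟨hwL, hws, hrest⟩ := (localPos_char hL2 x (C.vtx i2)).mp harc2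
      rcases eq_or_ne u (C.vtx i2) with rfl | hneu
      · rw [hs2u] at hws; exact absurd hws (by simp)
      · rw [hrest u huL2 hneu, hs2u]
    | false =>
      rw [hs] at harc2; simp only [Bool.false_eq_true, if_false] at harc2
      obtain ⟨hwL, hws, hrest⟩ := (localNeg_char hL2 x (C.vtx i2)).mp harc2
      rcases eq_or_ne u (C.vtx i2) with rfl | hneu
      · exact absurd ⟨i2, hi2lt, rfl, by rw [hi2succ, hv2], hs⟩ hnN
      · rw [hrest u huL2 hneu, hs2u]
  rw [hxu1] at hxu2; exact absurd hxu2 (by simp)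
end

section
/- Let f be a BN on a finite variable set V. Then IG(P(f)) has the same vertex set as IG(f) and every signed arc of IG(P(f)) is a signed arc of IG(f); consequently, IG(P^ω(f)) has the same vertex set as IG(f) and every signed arc of IG(P^ω(f)) is a signed arc of IG(f). -/
open Classical in
lemma sigma_update_const {V : Type*} [DecidableEq V] (f : V → (V → Bool) → Bool)
    (x : V → Bool) (u : V) (b : Bool) (hc : ∃ c : Bool, ∀ y, f u y = c) :
    (fun w => if h : ∃ c : Bool, ∀ y, f w y = c then h.choose else Function.update x u b w)
      = (fun w => if h : ∃ c : Bool, ∀ y, f w y = c then h.choose else x w) := by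
  funext w
  by_cases h : ∃ c : Bool, ∀ y, f w y = c
  · simp [h]
  · have hw : w ≠ u := fun e => h (e ▸ hc)
    simp [h, Function.update_of_ne hw]

open Classical in
lemma sigma_update_nonconst {V : Type*} [DecidableEq V] (f : V → (V → Bool) → Bool)
    (x : V → Bool) (u : V) (b : Bool) (hc : ¬ ∃ c : Bool, ∀ y, f u y = c) :
    (fun w => if h : ∃ c : Bool, ∀ y, f w y = c then h.choose else Function.update x u b w)
      = Function.update
          (fun w => if h : ∃ c : Bool, ∀ y, f w y = c then h.choose else x w) u b := by
  funext w
  by_cases hw : w = u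
  · subst hw
    rw [dif_neg hc, Function.update_self, Function.update_self]
  · have hr : Function.update
        (fun w => if h : ∃ c : Bool, ∀ y, f w y = c then h.choose else x w) u b w
        = if h : ∃ c : Bool, ∀ y, f w y = c then h.choose else x w :=
      Function.update_of_ne hw _ _
    rw [hr]
    by_cases h : ∃ c : Bool, ∀ y, f w y = c
    · rw [dif_pos h, dif_pos h]
    · rw [dif_neg h, dif_neg h, Function.update_of_ne hw]

open Classical in
lemma perc_step {V : Type*} [DecidableEq V] (f : V → (V → Bool) → Bool) :
    (∀ u v, igPos (percolate f) u v → igPos f u v) ∧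
    (∀ u v, igNeg (percolate f) u v → igNeg f u v) := by
  have hperc : ∀ v x, percolate f v x
      = f v (fun w => if h : ∃ c : Bool, ∀ y, f w y = c then h.choose else x w) :=
    fun _ _ => rfl
  constructor
  · rintro u v ⟨x, h0, h1⟩
    rw [hperc] at h0 h1
    by_cases hc : ∃ c : Bool, ∀ y, f u y = c
    · rw [sigma_update_const f x u false hc] at h0
      rw [sigma_update_const f x u true hc] at h1
      rw [h0] at h1; exact absurd h1 (by simp)
    · rw [sigma_update_nonconst f x u false hc] at h0
      rw [sigma_update_nonconst f x u true hc] at h1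
      exact ⟨_, h0, h1⟩
  · rintro u v ⟨x, h0, h1⟩
    rw [hperc] at h0 h1
    by_cases hc : ∃ c : Bool, ∀ y, f u y = c
    · rw [sigma_update_const f x u false hc] at h0
      rw [sigma_update_const f x u true hc] at h1
      rw [h0] at h1; exact absurd h1 (by simp)
    · rw [sigma_update_nonconst f x u false hc] at h0
      rw [sigma_update_nonconst f x u true hc] at h1
      exact ⟨_, h0, h1⟩

lemma perc_iter {V : Type*} [DecidableEq V] (f : V → (V → Bool) → Bool) (n : ℕ) :
    (∀ u v, igPos (percolate^[n] f) u v → igPos f u v) ∧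
    (∀ u v, igNeg (percolate^[n] f) u v → igNeg f u v) := by
  induction n with
  | zero => exact ⟨fun _ _ h => h, fun _ _ h => h⟩
  | succ n ih =>
    rw [Function.iterate_succ_apply']
    exact ⟨fun u v h => ih.1 u v ((perc_step _).1 u v h),
      fun u v h => ih.2 u v ((perc_step _).2 u v h)⟩

theorem stmt_7 {V : Type*} [Fintype V] [DecidableEq V]
    (f : V → (V → Bool) → Bool) :
    ((∀ u v, igPos (percolate f) u v → igPos f u v) ∧
      (∀ u v, igNeg (percolate f) u v → igNeg f u v)) ∧
    ∀ (g : V → (V → Bool) → Bool) (n : ℕ), g = percolate^[n] f → percolate g = g →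
      (∀ u v, igPos g u v → igPos f u v) ∧ (∀ u v, igNeg g u v → igNeg f u v) := by
  refine ⟨perc_step f, fun g n hg _ => ?_⟩
  subst hg; exact perc_iter f n
end

section
/- Let f be a BN on a finite variable set V. Then the set of attractors of ASTG(P(f)) equals the set of attractors of ASTG(f); consequently, the set of attractors of ASTG(P^ω(f)) equals the set of attractors of ASTG(f). -/
section AuxPerc

variable {V : Type*}

private lemma reach_subset_of_trap {W : Type*} {E : W → W → Prop} {A : Set W}
    (hA : TrapSet E A) {x : W} (hx : x ∈ A) {y : W}
    (h : Relation.ReflTransGen E x y) : y ∈ A := by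
  induction h with
  | refl => exact hx
  | tail _ h2 ih => exact hA.2 _ ih _ h2

private lemma attractor_reach {W : Type*} {E : W → W → Prop} {A : Set W}
    (hA : Attractor E A) {x : W} (hx : x ∈ A) :
    A = {y | Relation.ReflTransGen E x y} := by
  refine (hA.2 _ ?_ ?_).symm
  · intro y hy; exact reach_subset_of_trap hA.1 hx hy
  · exact ⟨⟨x, Relation.ReflTransGen.refl⟩, fun a ha b hb => ha.tail hb⟩

private def Sset (f : V → (V → Bool) → Bool) : Set (V → Bool) :=
  {x | ∀ u (h : ∃ b : Bool, ∀ y, f u y = b), x u = h.choose}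

private lemma perc_eq_on_S (f : V → (V → Bool) → Bool) {x} (hx : x ∈ Sset f) (v : V) :
    percolate f v x = f v x := by
  unfold percolate
  congr 1
  funext u
  split
  · exact (hx u ‹_›).symm
  · rfl

private lemma perc_const (f : V → (V → Bool) → Bool) (u : V)
    (h : ∃ b : Bool, ∀ y, f u y = b) (x : V → Bool) :
    percolate f u x = h.choose := by
  unfold percolate
  exact h.choose_spec _

private lemma step_preserve (f : V → (V → Bool) → Bool) {g : V → (V → Bool) → Bool}
    (hg : ∀ u (h : ∃ b : Bool, ∀ y, f u y = b) x, g u x = h.choose)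
    {u} (h : ∃ b : Bool, ∀ y, f u y = b) {x y} (hxy : astg g x y)
    (hx : x u = h.choose) : y u = h.choose := by
  obtain ⟨v, hv1, _, hv3⟩ := hxy
  by_cases huv : u = v
  · subst huv; rw [hv1, hg u h]
  · rw [hv3 u huv]; exact hx

private lemma reach_preserve (f : V → (V → Bool) → Bool) {g : V → (V → Bool) → Bool}
    (hg : ∀ u (h : ∃ b : Bool, ∀ y, f u y = b) x, g u x = h.choose)
    {u} (h : ∃ b : Bool, ∀ y, f u y = b) {x y}
    (hr : Relation.ReflTransGen (astg g) x y) (hx : x u = h.choose) :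
    y u = h.choose := by
  induction hr with
  | refl => exact hx
  | tail _ h2 ih => exact step_preserve f hg h h2 ih

private lemma attr_subset_S (f : V → (V → Bool) → Bool) {g : V → (V → Bool) → Bool}
    (hg : ∀ u (h : ∃ b : Bool, ∀ y, f u y = b) x, g u x = h.choose)
    {A : Set (V → Bool)} (hA : Attractor (astg g) A) : A ⊆ Sset f := by
  intro x hx u h
  by_contra hne
  classical
  have harc : astg g x (Function.update x u h.choose) :=
    ⟨u, by rw [Function.update_self, hg u h],
      by rw [Function.update_self]; exact fun e => hne e.symm,
      fun w hw => Function.update_of_ne hw _ _⟩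
  have hx'A : Function.update x u h.choose ∈ A := hA.1.2 x hx _ harc
  have hreach : Relation.ReflTransGen (astg g) (Function.update x u h.choose) x := by
    have := attractor_reach hA hx'A
    rw [this] at hx
    exact hx
  exact hne (reach_preserve f hg h hreach (Function.update_self _ _ _))

private lemma arc_iff (f : V → (V → Bool) → Bool) {x} (hx : x ∈ Sset f) (y : V → Bool) :
    astg (percolate f) x y ↔ astg f x y := by
  constructor
  · rintro ⟨v, h1, h2, h3⟩
    exact ⟨v, by rw [h1, perc_eq_on_S f hx], h2, h3⟩
  · rintro ⟨v, h1, h2, h3⟩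
    exact ⟨v, by rw [h1, perc_eq_on_S f hx], h2, h3⟩

private lemma transfer (f : V → (V → Bool) → Bool) {g1 g2 : V → (V → Bool) → Bool}
    (hc1 : ∀ u (h : ∃ b : Bool, ∀ y, f u y = b) x, g1 u x = h.choose)
    (harc : ∀ x ∈ Sset f, ∀ y, astg g1 x y ↔ astg g2 x y)
    {A : Set (V → Bool)} (hA : Attractor (astg g1) A) : Attractor (astg g2) A := by
  have hAS : A ⊆ Sset f := attr_subset_S f hc1 hA
  refine ⟨⟨hA.1.1, fun x hx y hy => hA.1.2 x hx y ((harc x (hAS hx) y).mpr hy)⟩, ?_⟩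
  intro B hBA hB
  exact hA.2 B hBA ⟨hB.1, fun x hx y hy => hB.2 x hx y ((harc x (hAS (hBA hx)) y).mp hy)⟩

private lemma main_attr (g : V → (V → Bool) → Bool) :
    {A : Set (V → Bool) | Attractor (astg (percolate g)) A} =
      {A : Set (V → Bool) | Attractor (astg g) A} := by
  ext A
  simp only [Set.mem_setOf_eq]
  have hc2 : ∀ u (h : ∃ b : Bool, ∀ y, g u y = b) x, g u x = h.choose :=
    fun u h x => h.choose_spec x
  constructor
  · exact transfer g (perc_const g) (fun x hx y => arc_iff g hx y)
  · exact transfer g hc2 (fun x hx y => (arc_iff g hx y).symm)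

end AuxPerc

theorem stmt_8 {V : Type*} [Fintype V] (f : V → (V → Bool) → Bool) :
    {A : Set (V → Bool) | Attractor (astg (percolate f)) A} =
      {A : Set (V → Bool) | Attractor (astg f) A} ∧
    ∀ (g : V → (V → Bool) → Bool) (n : ℕ), g = percolate^[n] f → percolate g = g →
      {A : Set (V → Bool) | Attractor (astg g) A} =
        {A : Set (V → Bool) | Attractor (astg f) A} := by
  refine ⟨main_attr f, ?_⟩
  intro g n hg hfix
  subst hg
  clear hfix
  induction n with
  | zero => simp
  | succ n ih => rw [Function.iterate_succ_apply', main_attr, ih]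
end

section
/- Let g be a BN on a finite variable set V, let U ⊆ V be a set of source variables of g, let x : U → Bool, and let g^x be the BN with g^x_v equal to the constant function x(v) for every v ∈ U and g^x_v = g_v for all v ∉ U. Then a set A of states is an attractor of ASTG(g^x) if and only if A is an attractor of ASTG(g) and every state s ∈ A satisfies s(v) = x(v) for all v ∈ U. -/
theorem stmt_13 {V : Type*} [Fintype V] (g gx : V → (V → Bool) → Bool) (U : Set V)
    (x : V → Bool)
    (hsrc : ∀ v ∈ U, ∀ s, g v s = s v)
    (hgxU : ∀ v ∈ U, ∀ s, gx v s = x v)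
    (hgxg : ∀ v ∉ U, gx v = g v)
    (A : Set (V → Bool)) :
    Attractor (astg gx) A ↔
      Attractor (astg g) A ∧ ∀ s ∈ A, ∀ v ∈ U, s v = x v := by
  classical
  -- arcs from states agreeing with x on U coincide for g and gx
  have harc : ∀ s : V → Bool, (∀ v ∈ U, s v = x v) → ∀ y, (astg gx s y ↔ astg g s y) := by
    intro s hs y
    constructor
    · rintro ⟨v, h1, h2, h3⟩
      refine ⟨v, ?_, h2, h3⟩
      by_cases hv : v ∈ U
      · exact absurd (h1.trans ((hgxU v hv s).trans (hs v hv).symm)) h2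
      · rw [← hgxg v hv]; exact h1
    · rintro ⟨v, h1, h2, h3⟩
      refine ⟨v, ?_, h2, h3⟩
      by_cases hv : v ∈ U
      · exact absurd (h1.trans (hsrc v hv s)) h2
      · rw [hgxg v hv]; exact h1
  -- g-arcs preserve agreement with x on U
  have hpres : ∀ s : V → Bool, (∀ v ∈ U, s v = x v) → ∀ y, astg g s y →
      ∀ v ∈ U, y v = x v := by
    rintro s hs y ⟨v, h1, h2, h3⟩ u hu
    by_cases huv : u = v
    · subst huv; exact absurd (h1.trans (hsrc u hu s)) h2
    · rw [h3 u huv, hs u hu]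
  -- from any state of a gx-trap set one can reach a state agreeing with x on U
  have hreach : ∀ A : Set (V → Bool), TrapSet (astg gx) A →
      ∀ s ∈ A, ∃ t ∈ A, ∀ v ∈ U, t v = x v := by
    intro A hA
    suffices h : ∀ n (s : V → Bool),
        (Finset.univ.filter (fun v => v ∈ U ∧ s v ≠ x v)).card = n → s ∈ A →
        ∃ t ∈ A, ∀ v ∈ U, t v = x v by
      intro s hs; exact h _ s rfl hs
    intro n
    induction n with
    | zero =>
      intro s hcard hs
      refine ⟨s, hs, ?_⟩
      intro v hv
      by_contra hne
      have hmem : v ∈ Finset.univ.filter (fun v => v ∈ U ∧ s v ≠ x v) := by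
        simp [hv, hne]
      rw [Finset.card_eq_zero] at hcard
      simp [hcard] at hmem
    | succ n ih =>
      intro s hcard hs
      obtain ⟨v, hv⟩ : (Finset.univ.filter (fun v => v ∈ U ∧ s v ≠ x v)).Nonempty := by
        rw [← Finset.card_pos, hcard]; omega
      simp only [Finset.mem_filter, Finset.mem_univ, true_and] at hv
      set t := Function.update s v (x v) with ht
      have harc' : astg gx s t := by
        refine ⟨v, ?_, ?_, ?_⟩
        · simp [ht, hgxU v hv.1]
        · simp [ht]; exact fun h => hv.2 h.symm
        · intro u hu; exact Function.update_of_ne hu _ _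
      have htA : t ∈ A := hA.2 s hs t harc'
      apply ih t ?_ htA
      have hset : Finset.univ.filter (fun u => u ∈ U ∧ t u ≠ x u) =
          (Finset.univ.filter (fun u => u ∈ U ∧ s u ≠ x u)).erase v := by
        ext u
        simp only [Finset.mem_filter, Finset.mem_univ, true_and, Finset.mem_erase]
        by_cases huv : u = v
        · subst huv; simp [ht]
        · simp [ht, Function.update_of_ne huv, huv]
      rw [hset, Finset.card_erase_of_mem (by simp [hv]), hcard]
      omega
  constructor
  · rintro hAt
    -- first: every state of A agrees with x on U
    have hAagree : ∀ s ∈ A, ∀ v ∈ U, s v = x v := by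
      set B : Set (V → Bool) := A ∩ {s | ∀ v ∈ U, s v = x v} with hB
      have hBtrap : TrapSet (astg gx) B := by
        constructor
        · obtain ⟨s, hs⟩ := hAt.1.1
          obtain ⟨t, htA, htagree⟩ := hreach A hAt.1 s hs
          exact ⟨t, htA, htagree⟩
        · rintro s ⟨hsA, hsagree⟩ y hy
          refine ⟨hAt.1.2 s hsA y hy, ?_⟩
          exact hpres s hsagree y ((harc s hsagree y).mp hy)
      have := hAt.2 B Set.inter_subset_left hBtrap
      intro s hs
      rw [← this] at hs
      exact hs.2
    refine ⟨⟨⟨hAt.1.1, ?_⟩, ?_⟩, hAagree⟩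
    · intro s hs y hy
      exact hAt.1.2 s hs y ((harc s (hAagree s hs) y).mpr hy)
    · intro B hBA hBtrap
      refine hAt.2 B hBA ⟨hBtrap.1, ?_⟩
      intro s hs y hy
      exact hBtrap.2 s hs y ((harc s (hAagree s (hBA hs)) y).mp hy)
  · rintro ⟨hAt, hAagree⟩
    constructor
    · refine ⟨hAt.1.1, ?_⟩
      intro s hs y hy
      exact hAt.1.2 s hs y ((harc s (hAagree s hs) y).mp hy)
    · intro B hBA hBtrap
      refine hAt.2 B hBA ⟨hBtrap.1, ?_⟩
      intro s hs y hy
      exact hBtrap.2 s hs y ((harc s (hAagree s (hBA hs)) y).mpr hy)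
end

section
/- Let f be an AND-NOT BN on a finite variable set V, let U ⊆ V intersect the vertex set of every strong even cycle of IG(f), and let g be the BN with g_v(x) = x(v) for every v ∈ U and every state x, and g_v = f_v for all v ∉ U. Then every strong even cycle of IG(g) is a positive self-loop at a vertex of U. -/
lemma aux_posU {V : Type*} [DecidableEq V] (g : V → (V → Bool) → Bool)
    (v : V) (hv : ∀ x, g v x = x v) (u : V) (h : igPos g u v) : u = v := by
  obtain ⟨x, h1, h2⟩ := h
  rw [hv] at h1 h2
  by_contra hne
  rw [Function.update_of_ne (fun e => hne e.symm)] at h1 h2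
  simp [h1] at h2

lemma aux_negU {V : Type*} [DecidableEq V] (g : V → (V → Bool) → Bool)
    (v : V) (hv : ∀ x, g v x = x v) (u : V) (h : igNeg g u v) : False := by
  obtain ⟨x, h1, h2⟩ := h
  rw [hv] at h1 h2
  by_cases hne : u = v
  · subst hne; simp at h1 h2
  · rw [Function.update_of_ne (fun e => hne e.symm)] at h1 h2
    simp [h1] at h2

lemma aux_posT {V : Type*} [DecidableEq V] (f g : V → (V → Bool) → Bool)
    (v : V) (hv : g v = f v) (u : V) : igPos g u v ↔ igPos f u v := by
  simp only [igPos, localPos, hv]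

lemma aux_negT {V : Type*} [DecidableEq V] (f g : V → (V → Bool) → Bool)
    (v : V) (hv : g v = f v) (u : V) : igNeg g u v ↔ igNeg f u v := by
  simp only [igNeg, localNeg, hv]

theorem stmt_16 {V : Type*} [Fintype V] [DecidableEq V]
    (f g : V → (V → Bool) → Bool) (hf : IsAndNot f) (U : Finset V)
    (hU : ∀ C : CycleData V, IsCycleIn C (igPos f) (igNeg f) → IsEven C →
      IsStrong C (igPos f) (igNeg f) → ∃ v ∈ U, InCycle C v)
    (hgU : ∀ v ∈ U, ∀ x, g v x = x v) (hgf : ∀ v ∉ U, g v = f v)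
    (C : CycleData V) (hC : IsCycleIn C (igPos g) (igNeg g)) (heven : IsEven C)
    (hstrong : IsStrong C (igPos g) (igNeg g)) :
    ∃ v ∈ U, C.n = 1 ∧ C.vtx 0 = v ∧ C.sgn 0 = true := by
  by_cases h : ∃ i < C.n, C.vtx i ∈ U
  · obtain ⟨i, hi, hvU⟩ := h
    -- consider the arc of C entering vtx i
    set j : ℕ := if i = 0 then C.n - 1 else i - 1 with hj
    have hjn : j < C.n := by
      rcases Nat.eq_zero_or_pos i with h0 | h0
      · simp [hj, h0]; omega
      · simp [hj, Nat.pos_iff_ne_zero.mp h0]; omega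
    have hsucc : (j + 1) % C.n = i := by
      rcases Nat.eq_zero_or_pos i with h0 | h0
      · simp [hj, h0]
        have : C.n - 1 + 1 = C.n := Nat.succ_pred_eq_of_pos C.npos
        simp [this, Nat.mod_self]
      · have hne : i ≠ 0 := Nat.pos_iff_ne_zero.mp h0
        simp [hj, hne]
        have : i - 1 + 1 = i := Nat.succ_pred_eq_of_pos h0
        rw [this, Nat.mod_eq_of_lt hi]
    have harc := hC j hjn
    rw [hsucc] at harc
    have hji : j = i := by
      by_cases hs : C.sgn j
      · rw [if_pos hs] at harc
        exact C.inj j hjn i hi (aux_posU g _ (hgU _ hvU) _ harc)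
      · rw [if_neg hs] at harc
        exact absurd harc (fun hh => aux_negU g _ (hgU _ hvU) _ hh)
    have hi0 : i = 0 := by
      by_contra hne
      have : j = i - 1 := by simp [hj, hne]
      omega
    have hn1 : C.n = 1 := by
      subst hi0
      have : j = C.n - 1 := by simp [hj]
      omega
    refine ⟨C.vtx 0, by rwa [← hi0], hn1, rfl, ?_⟩
    have harc0 := hC 0 (by omega)
    rw [hn1] at harc0
    norm_num at harc0
    by_cases hs : C.sgn 0
    · exact hs
    · rw [if_neg hs] at harc0
      exact absurd harc0 (fun hh => aux_negU g _ (hgU _ (hi0 ▸ hvU)) _ hh)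
  · -- no vertex of C is in U : C is a strong even cycle of IG(f), contradiction
    push_neg at h
    have hnotU : ∀ v, InCycle C v → v ∉ U := by
      rintro v ⟨i, hi, rfl⟩; exact h i hi
    have hgfv : ∀ v, InCycle C v → g v = f v := fun v hv => hgf v (hnotU v hv)
    have hCf : IsCycleIn C (igPos f) (igNeg f) := by
      intro i hi
      have hmemsucc : InCycle C (C.vtx ((i + 1) % C.n)) :=
        ⟨(i + 1) % C.n, Nat.mod_lt _ C.npos, rfl⟩
      have := hC i hi
      by_cases hs : C.sgn i
      · rw [if_pos hs] at this ⊢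
        exact (aux_posT f g _ (hgfv _ hmemsucc) _).mp this
      · rw [if_neg hs] at this ⊢
        exact (aux_negT f g _ (hgfv _ hmemsucc) _).mp this
    have hstrongf : IsStrong C (igPos f) (igNeg f) := by
      intro u v1 v2 hd
      obtain ⟨h1, h2, h3, h4, h5, h6, h7⟩ := hd
      exact hstrong u v1 v2 ⟨h1, h2, h3,
        (aux_posT f g _ (hgfv _ h1) _).mpr h4,
        (aux_negT f g _ (hgfv _ h2) _).mpr h5, h6, h7⟩
    obtain ⟨v, hvU, hvC⟩ := hU C hCf heven hstrongf
    exact absurd hvU (hnotU v hvC)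
end

section
/- Let h be an AND-NOT BN and let C be an even cycle of IG(h) that admits a delocalizing triple in IG(h). Then C is not a strong even cycle of IG(P^ω(h)): either C is not a cycle of IG(P^ω(h)), or C admits a delocalizing triple in IG(P^ω(h)). -/
section AuxPerc

variable {V : Type*} [DecidableEq V]

open Classical in
lemma percolate_apply (f : V → (V → Bool) → Bool) (v : V) (x : V → Bool) :
    percolate f v x
      = f v (fun u => if h : ∃ b : Bool, ∀ y, f u y = b then h.choose else x u) := rfl

lemma choose_eq_const {f : V → (V → Bool) → Bool} {u : V} {b : Bool}
    (hc : ∃ b' : Bool, ∀ y, f u y = b') (hb : ∀ y, f u y = b) : hc.choose = b :=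
  (hc.choose_spec (fun _ => true)).symm.trans (hb _)

lemma const_percolate {f : V → (V → Bool) → Bool} {v : V} {b : Bool}
    (hb : ∀ x, f v x = b) : ∀ x, percolate f v x = b := fun _ => hb _

lemma const_iterate {f : V → (V → Bool) → Bool} {v : V} {b : Bool}
    (hb : ∀ x, f v x = b) (k : ℕ) : ∀ x, (percolate^[k] f) v x = b := by
  induction k with
  | zero => exact hb
  | succ k ih =>
    intro x
    rw [Function.iterate_succ_apply']
    exact const_percolate ih x

lemma isAndNot_percolate {f : V → (V → Bool) → Bool} (hf : IsAndNot f) :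
    IsAndNot (percolate f) := by
  classical
  intro v
  rcases hf v with ⟨b, hb⟩ | ⟨L, sgn, hL⟩
  · exact Or.inl ⟨b, const_percolate hb⟩
  · by_cases hbad : ∃ w ∈ L, ∃ b, (∀ y, f w y = b) ∧ b ≠ sgn w
    · left
      refine ⟨false, fun x => ?_⟩
      rw [percolate_apply, hL]
      apply decide_eq_false
      intro H
      obtain ⟨w, hwL, b, hbw, hbne⟩ := hbad
      have hw := H w hwL
      rw [dif_pos ⟨b, hbw⟩, choose_eq_const ⟨b, hbw⟩ hbw] at hw
      exact hbne hw
    · right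
      refine ⟨L.filter (fun w => ¬ ∃ b : Bool, ∀ y, f w y = b), sgn, fun x => ?_⟩
      rw [percolate_apply, hL]
      apply decide_eq_decide.mpr
      constructor
      · intro H w hw
        rw [Finset.mem_filter] at hw
        have hw' := H w hw.1
        rwa [dif_neg hw.2] at hw'
      · intro H w hw
        by_cases hc : ∃ b : Bool, ∀ y, f w y = b
        · rw [dif_pos hc]
          obtain ⟨b, hbw⟩ := hc
          rw [choose_eq_const ⟨b, hbw⟩ hbw]
          by_contra hne
          exact hbad ⟨w, hw, b, hbw, hne⟩
        · rw [dif_neg hc]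
          exact H w (Finset.mem_filter.mpr ⟨hw, hc⟩)

lemma isAndNot_iterate {f : V → (V → Bool) → Bool} (hf : IsAndNot f) (m : ℕ) :
    IsAndNot (percolate^[m] f) := by
  induction m with
  | zero => exact hf
  | succ m ih => rw [Function.iterate_succ_apply']; exact isAndNot_percolate ih

/-- From an arc of sign `c` from `u` to `v` in an AND-NOT network, extract a
conjunctive representation of `f v` with `u ∈ L` and `sgn u = c`. -/
lemma arc_mem {f : V → (V → Bool) → Bool} (hf : IsAndNot f) {u v : V} {c : Bool}
    (e : ∃ x, f v (Function.update x u (!c)) = false ∧ f v (Function.update x u c) = true) :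
    ∃ (L : Finset V) (sgn : V → Bool),
      (∀ x, f v x = decide (∀ w ∈ L, x w = sgn w)) ∧ u ∈ L ∧ sgn u = c := by
  obtain ⟨x, e0, e1⟩ := e
  rcases hf v with ⟨b, hb⟩ | ⟨L, sgn, hL⟩
  · rw [hb] at e0 e1; rw [e1] at e0; exact absurd e0 (by simp)
  · rw [hL] at e0 e1
    have H1 : ∀ w ∈ L, Function.update x u c w = sgn w := of_decide_eq_true e1
    have H0 : ¬ ∀ w ∈ L, Function.update x u (!c) w = sgn w := of_decide_eq_false e0
    push_neg at H0
    obtain ⟨w, hwL, hw⟩ := H0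
    have hwu : w = u := by
      by_contra hne
      rw [Function.update_of_ne hne] at hw
      have := H1 w hwL
      rw [Function.update_of_ne hne] at this
      exact hw this
    subst hwu
    have hsgn : sgn w = c := by
      have := H1 w hwL
      rw [Function.update_self] at this
      exact this.symm
    exact ⟨L, sgn, hL, hwL, hsgn⟩

/-- One percolation step preserves an arc of sign `c` from `u` to `v`, unless the
target becomes constant, provided `f u` is not constantly equal to `c`. -/
lemma survive {f : V → (V → Bool) → Bool} (hf : IsAndNot f) {u v : V} {c : Bool}
    (hu : ¬ ∀ x, f u x = c)
    (e : ∃ x, f v (Function.update x u (!c)) = false ∧ f v (Function.update x u c) = true) :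
    (∃ b, ∀ x, percolate f v x = b) ∨
      (∃ x, percolate f v (Function.update x u (!c)) = false ∧
        percolate f v (Function.update x u c) = true) := by
  classical
  obtain ⟨L, sgn, hL, huL, hsgn⟩ := arc_mem hf e
  by_cases hbad : ∃ w ∈ L, ∃ b, (∀ y, f w y = b) ∧ b ≠ sgn w
  · left
    refine ⟨false, fun x => ?_⟩
    rw [percolate_apply, hL]
    apply decide_eq_false
    intro H
    obtain ⟨w, hwL, b, hbw, hbne⟩ := hbad
    have hw := H w hwL
    rw [dif_pos ⟨b, hbw⟩, choose_eq_const ⟨b, hbw⟩ hbw] at hw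
    exact hbne hw
  · right
    have hcu : ¬ ∃ b : Bool, ∀ y, f u y = b := by
      rintro ⟨b, hb⟩
      by_cases hbc : b = c
      · exact hu (fun x => hbc ▸ hb x)
      · exact hbad ⟨u, huL, b, hb, by rw [hsgn]; exact hbc⟩
    refine ⟨sgn, ?_, ?_⟩
    · rw [percolate_apply, hL]
      apply decide_eq_false
      intro H
      have hw := H u huL
      rw [dif_neg hcu, Function.update_self, hsgn] at hw
      cases c <;> simp_all
    · rw [percolate_apply, hL]
      apply decide_eq_true
      intro w hwL
      by_cases hc : ∃ b : Bool, ∀ y, f w y = b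
      · rw [dif_pos hc]
        obtain ⟨b, hbw⟩ := hc
        rw [choose_eq_const ⟨b, hbw⟩ hbw]
        by_contra hne
        exact hbad ⟨w, hwL, b, hbw, hne⟩
      · rw [dif_neg hc]
        by_cases hwu : w = u
        · subst hwu
          rw [Function.update_self, hsgn]
        · rw [Function.update_of_ne hwu]

/-- Iterated percolation preserves an arc of sign `c` from `u` to `v`, unless the
target becomes constant, provided the final `u` is not constantly `c`. -/
lemma persist {h : V → (V → Bool) → Bool} (hh : IsAndNot h) {u v : V} {c : Bool} (n : ℕ)
    (hu : ¬ ∀ x, (percolate^[n] h) u x = c)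
    (e : ∃ x, h v (Function.update x u (!c)) = false ∧ h v (Function.update x u c) = true) :
    (∃ b, ∀ x, (percolate^[n] h) v x = b) ∨
      (∃ x, (percolate^[n] h) v (Function.update x u (!c)) = false ∧
        (percolate^[n] h) v (Function.update x u c) = true) := by
  have key : ∀ m, m ≤ n →
      (∃ b, ∀ x, (percolate^[m] h) v x = b) ∨
        (∃ x, (percolate^[m] h) v (Function.update x u (!c)) = false ∧
          (percolate^[m] h) v (Function.update x u c) = true) := by
    intro m
    induction m with
    | zero => exact fun _ => Or.inr e
    | succ m ih =>
      intro hm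
      have hm' : m ≤ n := Nat.le_of_succ_le hm
      rcases ih hm' with ⟨b, hb⟩ | harc
      · left
        refine ⟨b, ?_⟩
        rw [Function.iterate_succ_apply']
        exact const_percolate hb
      · have hum : ¬ ∀ x, (percolate^[m] h) u x = c := by
          intro hcm
          apply hu
          intro x
          have := const_iterate hcm (n - m) x
          rwa [← Function.iterate_add_apply, Nat.sub_add_cancel hm'] at this
        have := survive (isAndNot_iterate hh m) hum harc
        rw [Function.iterate_succ_apply' percolate m h]
        exact this
  exact key n le_rfl

/-- At a percolation fixpoint, a constant variable has no influence. -/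
lemma fix_no_out {g : V → (V → Bool) → Bool} (hfix : percolate g = g) {u : V}
    (hc : ∃ b, ∀ x, g u x = b) (v : V) (x : V → Bool) (b1 b2 : Bool) :
    g v (Function.update x u b1) = g v (Function.update x u b2) := by
  conv_lhs => rw [← hfix]
  conv_rhs => rw [← hfix]
  rw [percolate_apply, percolate_apply]
  congr 1
  funext w
  by_cases hw : ∃ b : Bool, ∀ y, g w y = b
  · rw [dif_pos hw, dif_pos hw]
  · have hwu : w ≠ u := fun e => hw (e ▸ hc)
    rw [dif_neg hw, dif_neg hw, Function.update_of_ne hwu, Function.update_of_ne hwu]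

/-- A constant vertex on a cycle of `IG(g)` is impossible. -/
lemma no_in_arc {g : V → (V → Bool) → Bool} {C : CycleData V}
    (hcyc : IsCycleIn C (igPos g) (igNeg g)) {v : V} {b : Bool}
    (hv : InCycle C v) (hb : ∀ x, g v x = b) : False := by
  obtain ⟨i, hi, hvi⟩ := hv
  have hnpos := C.npos
  have key : ∃ j, j < C.n ∧ (j + 1) % C.n = i := by
    by_cases h0 : i = 0
    · exact ⟨C.n - 1, by omega,
        by rw [show C.n - 1 + 1 = C.n by omega, Nat.mod_self, h0]⟩
    · exact ⟨i - 1, by omega,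
        by rw [show i - 1 + 1 = i by omega, Nat.mod_eq_of_lt hi]⟩
  obtain ⟨j, hj, hji⟩ := key
  have harc := hcyc j hj
  rw [hji, hvi] at harc
  by_cases hs : C.sgn j
  · rw [if_pos hs] at harc
    obtain ⟨x, e0, e1⟩ := harc
    rw [hb] at e0 e1
    rw [e1] at e0
    exact absurd e0 (by simp)
  · rw [if_neg hs] at harc
    obtain ⟨x, e0, e1⟩ := harc
    rw [hb] at e0 e1
    rw [e1] at e0
    exact absurd e0 (by simp)

end AuxPerc

theorem stmt_17 {V : Type*} [Fintype V] [DecidableEq V]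
    (h : V → (V → Bool) → Bool) (hh : IsAndNot h)
    (C : CycleData V) (hC : IsCycleIn C (igPos h) (igNeg h)) (heven : IsEven C)
    (hdeloc : ∃ u v1 v2, DelocTriple C (igPos h) (igNeg h) u v1 v2)
    (g : V → (V → Bool) → Bool) (n : ℕ)
    (hg : g = percolate^[n] h) (hfix : percolate g = g) :
    ¬ IsCycleIn C (igPos g) (igNeg g) ∨
      ∃ u v1 v2, DelocTriple C (igPos g) (igNeg g) u v1 v2 := by
  by_cases hcyc : IsCycleIn C (igPos g) (igNeg g)
  · right
    obtain ⟨u, v1, v2, h1, h2, hne, hpos, hneg, hp, hn⟩ := hdeloc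
    subst hg
    have epos : ∃ x, h v1 (Function.update x u (!true)) = false ∧
        h v1 (Function.update x u true) = true := by
      obtain ⟨x, e0, e1⟩ := hpos; exact ⟨x, e0, e1⟩
    have eneg : ∃ x, h v2 (Function.update x u (!false)) = false ∧
        h v2 (Function.update x u false) = true := by
      obtain ⟨x, e0, e1⟩ := hneg; exact ⟨x, e1, e0⟩
    by_cases hut : ∀ x, (percolate^[n] h) u x = true
    · -- `u` is constantly true after percolation; then `v2` must be constant,
      -- contradicting that `C` is a cycle of `IG(g)` through `v2`.
      have hun : ¬ ∀ x, (percolate^[n] h) u x = false := by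
        intro hf
        have := (hut (fun _ => true)).symm.trans (hf (fun _ => true))
        exact absurd this (by simp)
      rcases persist hh n hun eneg with ⟨b, hb⟩ | ⟨x, e0, e1⟩
      · exact (no_in_arc hcyc h2 hb).elim
      · have := fix_no_out hfix ⟨true, hut⟩ v2 x (!false) false
        rw [e0, e1] at this
        exact absurd this (by simp)
    · by_cases huf : ∀ x, (percolate^[n] h) u x = false
      · rcases persist hh n hut epos with ⟨b, hb⟩ | ⟨x, e0, e1⟩
        · exact (no_in_arc hcyc h1 hb).elim
        · have := fix_no_out hfix ⟨false, huf⟩ v1 x (!true) true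
          rw [e0, e1] at this
          exact absurd this (by simp)
      · rcases persist hh n hut epos with ⟨b, hb⟩ | harc1
        · exact (no_in_arc hcyc h1 hb).elim
        rcases persist hh n huf eneg with ⟨b, hb⟩ | harc2
        · exact (no_in_arc hcyc h2 hb).elim
        obtain ⟨x1, f0, f1⟩ := harc1
        obtain ⟨x2, g0, g1⟩ := harc2
        exact ⟨u, v1, v2, h1, h2, hne, ⟨x1, f0, f1⟩, ⟨x2, g1, g0⟩, hp, hn⟩
  · exact Or.inl hcyc
end

section
/- Let h be an AND-NOT BN, let C be a cycle of IG(h), and let k be a vertex witnessing the inconsistency of C in IG(h) such that the update function h_k is constant. Then some vertex of C has a constant update function in P^ω(h); in particular, C is not a cycle of IG(P^ω(h)). -/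
/-! By induction on `m`, the `(m+1)`-st percolation of `f` is `f` evaluated after substituting
the constants of the `m`-th one, and constants persist. So in an AND-NOT network a conjunction
with a literal that eventually becomes constantly false eventually becomes `false`, and a
conjunction whose only literal eventually becomes constantly true eventually becomes `true`.
Propagating the constant `h k` along the positive path (if `h k = false`) or the positive-negative
path (if `h k = true`) of the witness makes a vertex of `C` constant in the fixed point `g`, and a
constant vertex has no incoming arc. -/

section Percolation

variable {V : Type*}

open Classical in
noncomputable def substConstants (f : V → (V → Bool) → Bool) (x : V → Bool) : V → Bool :=
  fun u => if hu : ∃ b : Bool, ∀ y, f u y = b then hu.choose else x u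

theorem percolate_apply_s18 (f : V → (V → Bool) → Bool) (v : V) (x : V → Bool) :
    percolate f v x = f v (substConstants f x) := rfl

theorem substConstants_of_const {f : V → (V → Bool) → Bool} {u : V} {c : Bool}
    (hu : ∀ y, f u y = c) (x : V → Bool) : substConstants f x u = c := by
  have hex : ∃ b : Bool, ∀ y, f u y = b := ⟨c, hu⟩
  rw [substConstants, dif_pos hex, ← hex.choose_spec x, hu]

theorem substConstants_of_not_const {f : V → (V → Bool) → Bool} {u : V}
    (hu : ¬ ∃ b : Bool, ∀ y, f u y = b) (x : V → Bool) : substConstants f x u = x u :=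
  dif_neg hu

theorem iterate_percolate_of_const {f : V → (V → Bool) → Bool} {u : V} {c : Bool}
    (hu : ∀ y, f u y = c) (m : ℕ) (y : V → Bool) : percolate^[m] f u y = c := by
  induction m generalizing y with
  | zero => exact hu y
  | succ m ih => rw [Function.iterate_succ_apply', percolate_apply_s18, ih]

theorem substConstants_substConstants_iterate (f : V → (V → Bool) → Bool) (m : ℕ)
    (x : V → Bool) :
    substConstants f (substConstants (percolate^[m] f) x) = substConstants (percolate^[m] f) x := by
  funext u
  by_cases hu : ∃ b : Bool, ∀ y, f u y = b
  · obtain ⟨b, hb⟩ := hu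
    rw [substConstants_of_const hb, substConstants_of_const (iterate_percolate_of_const hb m)]
  · exact substConstants_of_not_const hu _

theorem iterate_percolate_succ_apply (f : V → (V → Bool) → Bool) (m : ℕ) (v : V)
    (x : V → Bool) :
    percolate^[m + 1] f v x = f v (substConstants (percolate^[m] f) x) := by
  induction m generalizing f x with
  | zero => rfl
  | succ m ih =>
    rw [Function.iterate_succ_apply, ih, percolate_apply_s18, ← Function.iterate_succ_apply,
      substConstants_substConstants_iterate]

theorem const_of_iterate_percolate_const {h g : V → (V → Bool) → Bool} {n : ℕ}
    (hg : g = percolate^[n] h) (hfix : percolate g = g) {v : V} {c : Bool} {M : ℕ}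
    (hM : ∀ x, percolate^[M] h v x = c) (x : V → Bool) : g v x = c := by
  have hgM : percolate^[M] g = g := Function.iterate_fixed hfix M
  rw [← hgM, hg, ← Function.iterate_add_apply, add_comm, Function.iterate_add_apply]
  exact iterate_percolate_of_const hM n x

end Percolation

section InfluenceGraph

variable {V : Type*} [DecidableEq V]

theorem cond_igPos_igNeg_iff (f : V → (V → Bool) → Bool) (b : Bool) (u v : V) :
    cond b (igPos f u v) (igNeg f u v) ↔
      ∃ x, f v (Function.update x u b) = true ∧ f v (Function.update x u (!b)) = false := by
  cases b
  · rfl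
  · simp only [cond_true, igPos, localPos, Bool.not_true, and_comm]

theorem not_cond_igPos_igNeg_of_const {f : V → (V → Bool) → Bool} {v : V} {c : Bool}
    (hv : ∀ x, f v x = c) (b : Bool) (u : V) : ¬ cond b (igPos f u v) (igNeg f u v) := by
  rw [cond_igPos_igNeg_iff]
  rintro ⟨x, h1, h0⟩
  rw [hv] at h1 h0
  exact Bool.false_ne_true (h0.symm.trans h1)

theorem cond_igPos_igNeg_iff_of_conj {f : V → (V → Bool) → Bool} {v : V} {L : Finset V}
    {s : V → Bool} (hv : ∀ x, f v x = decide (∀ w ∈ L, x w = s w)) (b : Bool) (u : V) :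
    cond b (igPos f u v) (igNeg f u v) ↔ u ∈ L ∧ s u = b := by
  simp only [cond_igPos_igNeg_iff, hv, decide_eq_true_iff, decide_eq_false_iff_not]
  constructor
  · rintro ⟨x, hsat, hunsat⟩
    push Not at hunsat
    obtain ⟨w, hwL, hw⟩ := hunsat
    obtain rfl : w = u := by
      by_contra hwu
      rw [Function.update_of_ne hwu] at hw
      exact hw (by simpa [Function.update_of_ne hwu] using hsat w hwL)
    exact ⟨hwL, by simpa using (hsat w hwL).symm⟩
  · rintro ⟨huL, rfl⟩
    refine ⟨s, fun w _ => ?_, fun hall => ?_⟩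
    · by_cases hwu : w = u
      · subst hwu; simp
      · simp [Function.update_of_ne hwu]
    · simpa using hall u huL

theorem IsAndNot.exists_conj_of_arc {f : V → (V → Bool) → Bool} (hf : IsAndNot f) {b : Bool}
    {u v : V} (huv : cond b (igPos f u v) (igNeg f u v)) :
    ∃ (L : Finset V) (s : V → Bool),
      (∀ x, f v x = decide (∀ w ∈ L, x w = s w)) ∧ u ∈ L ∧ s u = b := by
  rcases hf v with ⟨c, hc⟩ | ⟨L, s, hv⟩
  · exact absurd huv (not_cond_igPos_igNeg_of_const hc b u)
  · exact ⟨L, s, hv, (cond_igPos_igNeg_iff_of_conj hv b u).1 huv⟩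

end InfluenceGraph

section Propagation

variable {V : Type*} [DecidableEq V] {h : V → (V → Bool) → Bool}

theorem iterate_percolate_succ_false_of_arc (hh : IsAndNot h) {b : Bool} {k t : V}
    (hkt : cond b (igPos h k t) (igNeg h k t)) {m : ℕ}
    (hk : ∀ x, percolate^[m] h k x = !b) (x : V → Bool) :
    percolate^[m + 1] h t x = false := by
  obtain ⟨L, s, ht, hkL, rfl⟩ := hh.exists_conj_of_arc hkt
  rw [iterate_percolate_succ_apply, ht, decide_eq_false_iff_not]
  intro hall
  have := hall k hkL
  rw [substConstants_of_const hk] at this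
  exact Bool.not_ne_self _ this

theorem iterate_percolate_succ_true_of_unique_arc (hh : IsAndNot h) {k j : V}
    (hkj : igPos h k j) (huniq : ∃! p : V × Bool, cond p.2 (igPos h p.1 j) (igNeg h p.1 j))
    {m : ℕ} (hk : ∀ x, percolate^[m] h k x = true) (x : V → Bool) :
    percolate^[m + 1] h j x = true := by
  obtain ⟨L, s, hj, -, -⟩ := hh.exists_conj_of_arc (b := true) hkj
  rw [iterate_percolate_succ_apply, hj, decide_eq_true_iff]
  intro w hwL
  have hw : (w, s w) = (k, true) :=
    huniq.unique ((cond_igPos_igNeg_iff_of_conj hj _ w).2 ⟨hwL, rfl⟩) hkj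
  obtain ⟨rfl, hsw⟩ := Prod.mk.inj hw
  rw [substConstants_of_const hk, hsw]

theorem PosPath.exists_iterate_percolate_false (hh : IsAndNot h) :
    ∀ {k t : V} {is : List V} {m : ℕ}, PosPath (igPos h) k is t →
      (∀ x, percolate^[m] h k x = false) → ∃ M, ∀ x, percolate^[M] h t x = false
  | _, _, [], m, hkt, hk => ⟨m + 1, iterate_percolate_succ_false_of_arc hh (b := true) hkt hk⟩
  | _, _, _ :: _, _, ⟨hki, hit⟩, hk =>
    PosPath.exists_iterate_percolate_false hh hit
      (iterate_percolate_succ_false_of_arc hh (b := true) hki hk)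

theorem PosNegPath.exists_iterate_percolate_false (hh : IsAndNot h) :
    ∀ {k u : V} {js : List V} {m : ℕ}, PosNegPath (igPos h) (igNeg h) k js u →
      (∀ j ∈ js, ∃! p : V × Bool, cond p.2 (igPos h p.1 j) (igNeg h p.1 j)) →
      (∀ x, percolate^[m] h k x = true) → ∃ M, ∀ x, percolate^[M] h u x = false
  | _, _, [], m, hku, _, hk => ⟨m + 1, iterate_percolate_succ_false_of_arc hh (b := false) hku hk⟩
  | _, _, j :: _, _, ⟨hkj, hju⟩, hjs, hk =>
    PosNegPath.exists_iterate_percolate_false hh hju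
      (fun j' hj' => hjs j' (List.mem_cons_of_mem _ hj'))
      (iterate_percolate_succ_true_of_unique_arc hh hkj (hjs j List.mem_cons_self) hk)

end Propagation

theorem CycleData.exists_pred {V : Type*} (C : CycleData V) {i : ℕ} (hi : i < C.n) :
    ∃ j < C.n, (j + 1) % C.n = i := by
  rcases i with _ | i
  · exact ⟨C.n - 1, by have := C.npos; omega, by rw [Nat.sub_add_cancel C.npos, Nat.mod_self]⟩
  · exact ⟨i, by omega, Nat.mod_eq_of_lt hi⟩

theorem not_isCycleIn_of_const {V : Type*} [DecidableEq V] {f : V → (V → Bool) → Bool}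
    {C : CycleData V} {v : V} (hvC : InCycle C v) {c : Bool} (hv : ∀ x, f v x = c) :
    ¬ IsCycleIn C (igPos f) (igNeg f) := by
  intro hcyc
  obtain ⟨i, hi, rfl⟩ := hvC
  obtain ⟨j, hj, rfl⟩ := C.exists_pred hi
  have harc := hcyc j hj
  cases hs : C.sgn j <;> simp only [hs] at harc
  · exact not_cond_igPos_igNeg_of_const hv false _ harc
  · exact not_cond_igPos_igNeg_of_const hv true _ harc

theorem stmt_18_general {V : Type*} [DecidableEq V]
    (h : V → (V → Bool) → Bool) (hh : IsAndNot h)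
    (C : CycleData V) (k : V)
    (hk : WitnessesIncons (igPos h) (igNeg h) C k)
    (hconst : ∃ b, ∀ x, h k x = b)
    (g : V → (V → Bool) → Bool) (n : ℕ)
    (hg : g = percolate^[n] h) (hfix : percolate g = g) :
    (∃ v, InCycle C v ∧ ∃ b, ∀ x, g v x = b) ∧
      ¬ IsCycleIn C (igPos g) (igNeg g) := by
  obtain ⟨t, u, is, js, hkt, hku, htC, huC, -, -, -, hjs⟩ := hk
  obtain ⟨b, hb⟩ := hconst
  have hv : ∃ v, InCycle C v ∧ ∃ M, ∀ x, percolate^[M] h v x = false := by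
    cases b
    · exact ⟨t, htC, hkt.exists_iterate_percolate_false hh (m := 0) hb⟩
    · exact ⟨u, huC, hku.exists_iterate_percolate_false hh hjs (m := 0) hb⟩
  obtain ⟨v, hvC, M, hM⟩ := hv
  have hgv : ∀ x, g v x = false := const_of_iterate_percolate_const hg hfix hM
  exact ⟨⟨v, hvC, false, hgv⟩, not_isCycleIn_of_const hvC hgv⟩

theorem stmt_18 {V : Type*} [Fintype V] [DecidableEq V]
    (h : V → (V → Bool) → Bool) (hh : IsAndNot h)
    (C : CycleData V) (hC : IsCycleIn C (igPos h) (igNeg h)) (k : V)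
    (hk : WitnessesIncons (igPos h) (igNeg h) C k)
    (hconst : ∃ b, ∀ x, h k x = b)
    (g : V → (V → Bool) → Bool) (n : ℕ)
    (hg : g = percolate^[n] h) (hfix : percolate g = g) :
    (∃ v, InCycle C v ∧ ∃ b, ∀ x, g v x = b) ∧
      ¬ IsCycleIn C (igPos g) (igNeg g) :=
  stmt_18_general h hh C k hk hconst g n hg hfix
end
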